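/- Let r ∈ ℚ with r > 1, r ∉ ℕ, fix i ∈ ℕ, and let M_i := ⟨{r^{2k} : k ∈ ℕ₀} ∪ {r^{2j−1} : 1 ≤ j ≤ i}⟩ and x_i := n(r)² · r^{2i} ∈ M_i. Then the factorization of x_i as d(r)² copies of the atom r^{2i+2} is the unique factorization of minimum length of x_i in M_i. -/

import Mathlib

open scoped NNRat ENNReal

/-- The set of atoms of a Puiseux monoid (additive submonoid of `ℚ≥0`). -/
def PMatoms (M : AddSubmonoid ℚ≥0) : Set ℚ≥0 :=
  {a | a ∈ M ∧ a ≠ 0 ∧ ∀ y ∈ M, ∀ z ∈ M, y ≠ 0 → z ≠ 0 → a ≠ y + z}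

/-- A Puiseux monoid is atomic if it is generated by its atoms. -/
def PMatomic (M : AddSubmonoid ℚ≥0) : Prop :=
  ∀ x ∈ M, x ∈ AddSubmonoid.closure (PMatoms M)

/-- The set of factorizations of `x` in `M`: multisets of atoms summing to `x`. -/
def PMfactorizations (M : AddSubmonoid ℚ≥0) (x : ℚ≥0) : Set (Multiset ℚ≥0) :=
  {s | (∀ a ∈ s, a ∈ PMatoms M) ∧ s.sum = x}

/-- The set of lengths of `x` in `M`. -/
def PMlengths (M : AddSubmonoid ℚ≥0) (x : ℚ≥0) : Set ℕ :=
  Multiset.card '' PMfactorizations M x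

/-- The elasticity of an element: `sup L(x) / inf L(x)` in `ℝ≥0∞`, `1` for `x = 0`. -/
noncomputable def PMelasticityOf (M : AddSubmonoid ℚ≥0) (x : ℚ≥0) : ℝ≥0∞ :=
  if x = 0 then 1
  else sSup ((fun n : ℕ => (n : ℝ≥0∞)) '' PMlengths M x) /
       sInf ((fun n : ℕ => (n : ℝ≥0∞)) '' PMlengths M x)

/-- The elasticity of a Puiseux monoid. -/
noncomputable def PMelasticity (M : AddSubmonoid ℚ≥0) : ℝ≥0∞ :=
  ⨆ x ∈ M, PMelasticityOf M x

/-- The union of sets of lengths containing `n`. -/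
def PMunionOfLengths (M : AddSubmonoid ℚ≥0) (n : ℕ) : Set ℕ :=
  {m | ∃ x : ℚ≥0, n ∈ PMlengths M x ∧ m ∈ PMlengths M x}

/-- The `n`-th local elasticity `ρ_n(M) = sup U_n(M)` in `ℝ≥0∞`. -/
noncomputable def PMlocalElasticity (M : AddSubmonoid ℚ≥0) (n : ℕ) : ℝ≥0∞ :=
  sSup ((fun m : ℕ => (m : ℝ≥0∞)) '' PMunionOfLengths M n)

/-- The set of distances of an element `x` of `M`. -/
def PMdistances (M : AddSubmonoid ℚ≥0) (x : ℚ≥0) : Set ℕ :=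
  {d | 0 < d ∧ ∃ l ∈ PMlengths M x,
    PMlengths M x ∩ Set.Icc l (l + d) = {l, l + d}}

/-- The set of distances (delta set) of `M`. -/
def PMDelta (M : AddSubmonoid ℚ≥0) : Set ℕ :=
  ⋃ x ∈ {y : ℚ≥0 | y ∈ M ∧ y ≠ 0}, PMdistances M x

/-- `(Mi)` is an approximation of `M`: an increasing sequence of atomic submonoids
with union `M` and increasing sets of atoms. -/
def PMapprox (M : AddSubmonoid ℚ≥0) (Mi : ℕ → AddSubmonoid ℚ≥0) : Prop :=
  (∀ i, Mi i ≤ Mi (i + 1)) ∧ (∀ i, PMatomic (Mi i)) ∧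
  (∀ i, PMatoms (Mi i) ⊆ PMatoms (Mi (i + 1))) ∧
  (∀ x, x ∈ M ↔ ∃ i, x ∈ Mi i)

/-!
Write `r = n / d`. If `t` is a multiset of exponents with maximum `M` whose other elements are at
most `M - a`, multiplying `∑ m ∈ t, r ^ m` by `d ^ M` gives `count M t * n ^ M` modulo `d ^ a`.
When all exponents are below `K` this forces `d ∣ n ^ K`, impossible for `d ≥ 2`, so `r ^ (2i+2)`
is an atom. If `∑ m ∈ t, r ^ m = d ^ 2 * r ^ (2i+2)` with at most `d ^ 2` terms, then `M ≥ 2i+2`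
by size, hence `M` is even and the odd number `M - 1 ≥ 2i` is not an exponent of a generator; the
congruence modulo `d ^ 2` gives `d ^ 2 ∣ count M t`. So all `d ^ 2` terms equal `r ^ M`, and
`M = 2i+2`.
-/

open Multiset

lemma Multiset.exists_map_eq_of_forall_mem_image {α β : Type*} {f : α → β} {P : Set α}
    {s : Multiset β} (h : ∀ b ∈ s, b ∈ f '' P) :
    ∃ t : Multiset α, (∀ a ∈ t, a ∈ P) ∧ t.map f = s := by
  induction s using Multiset.induction_on with
  | empty => exact ⟨0, by simp, rfl⟩
  | cons b s ih =>
    obtain ⟨t, htP, rfl⟩ := ih fun b hb => h b (mem_cons_of_mem hb)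
    obtain ⟨a, haP, rfl⟩ := h b (mem_cons_self _ _)
    refine ⟨a ::ₘ t, ?_, by simp⟩
    simpa [forall_mem_cons] using And.intro haP htP

lemma PMatoms_closure_subset (S : Set ℚ≥0) : PMatoms (AddSubmonoid.closure S) ⊆ S := by
  rintro a ⟨ha, ha0, hirr⟩
  suffices ∀ x ∈ AddSubmonoid.closure S, x = 0 ∨ x ∈ S ∨ ∃ y ∈ AddSubmonoid.closure S,
      ∃ z ∈ AddSubmonoid.closure S, y ≠ 0 ∧ z ≠ 0 ∧ x = y + z by
    rcases this a ha with h | h | ⟨y, hy, z, hz, hy0, hz0, rfl⟩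
    exacts [(ha0 h).elim, h, (hirr y hy z hz hy0 hz0 rfl).elim]
  intro x hx
  induction hx using AddSubmonoid.closure_induction with
  | mem x hx => exact Or.inr (Or.inl hx)
  | zero => exact Or.inl rfl
  | add y z hy hz ihy ihz =>
    by_cases hy0 : y = 0
    · simpa [hy0] using ihz
    by_cases hz0 : z = 0
    · simpa [hz0] using ihy
    exact Or.inr (Or.inr ⟨y, hy, z, hz, hy0, hz0, rfl⟩)

namespace NNRat

variable (r : ℚ≥0)

lemma pow_mul_den_pow {m M : ℕ} (h : m ≤ M) :
    r ^ m * (r.den : ℚ≥0) ^ M = ((r.num ^ m * r.den ^ (M - m) : ℕ) : ℚ≥0) := by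
  obtain ⟨k, rfl⟩ := Nat.exists_eq_add_of_le h
  simp only [Nat.add_sub_cancel_left, Nat.cast_mul, Nat.cast_pow, ← r.den_mul_eq_num]
  ring

lemma exists_sum_pow_mul_den_pow_eq {t : Multiset ℕ} {M a : ℕ}
    (ht : ∀ m ∈ t, m = M ∨ m + a ≤ M) :
    ∃ q : ℕ, (t.map (r ^ ·)).sum * (r.den : ℚ≥0) ^ M
      = ((t.count M * r.num ^ M + r.den ^ a * q : ℕ) : ℚ≥0) := by
  induction t using Multiset.induction_on with
  | empty => exact ⟨0, by simp⟩
  | cons m t ih =>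
    obtain ⟨q, hq⟩ := ih fun m hm => ht m (mem_cons_of_mem hm)
    rw [map_cons, sum_cons, add_mul, hq]
    by_cases hmM : m = M
    · subst hmM
      refine ⟨q, ?_⟩
      rw [pow_mul_den_pow r le_rfl, Nat.sub_self, count_cons_self]
      push_cast
      ring
    · have hm : m + a ≤ M := (ht m (mem_cons_self m t)).resolve_left hmM
      obtain ⟨k, hk⟩ : ∃ k, M - m = a + k := ⟨M - m - a, by omega⟩
      refine ⟨r.num ^ m * r.den ^ k + q, ?_⟩
      rw [pow_mul_den_pow r (by omega), hk, count_cons_of_ne (Ne.symm hmM)]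
      push_cast
      ring

lemma den_pow_dvd_count_of_sum_pow_eq {t : Multiset ℕ} {M a K : ℕ}
    (ht : ∀ m ∈ t, m = M ∨ m + a ≤ M) (hK : K ≤ M)
    (hsum : (t.map (r ^ ·)).sum = (r.den : ℚ≥0) ^ a * r ^ K) : r.den ^ a ∣ t.count M := by
  obtain ⟨q, hq⟩ := r.exists_sum_pow_mul_den_pow_eq ht
  rw [hsum, mul_assoc, pow_mul_den_pow r hK] at hq
  have hq : r.den ^ a * (r.num ^ K * r.den ^ (M - K))
      = t.count M * r.num ^ M + r.den ^ a * q := by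
    exact_mod_cast hq
  have hdvd : r.den ^ a ∣ t.count M * r.num ^ M :=
    (Nat.dvd_add_left (dvd_mul_right _ q)).mp (hq ▸ dvd_mul_right _ _)
  exact (Nat.Coprime.pow a M r.coprime_num_den.symm).dvd_of_dvd_mul_right hdvd

lemma sum_pow_ne_pow_of_lt (hd : r.den ≠ 1) {t : Multiset ℕ} {K : ℕ} (ht : ∀ m ∈ t, m < K) :
    (t.map (r ^ ·)).sum ≠ r ^ K := by
  intro hsum
  have hcount : t.count K = 0 := count_eq_zero.mpr fun hK => lt_irrefl K (ht K hK)
  obtain ⟨q, hq⟩ := r.exists_sum_pow_mul_den_pow_eq (a := 1) fun m hm => Or.inr (ht m hm)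
  rw [hsum, pow_mul_den_pow r le_rfl, hcount, Nat.sub_self] at hq
  have hq : r.num ^ K = r.den * q := by
    simp only [pow_one, zero_mul, zero_add, mul_one, pow_zero] at hq
    exact_mod_cast hq
  exact hd <| (r.coprime_num_den.symm.pow_right K).eq_one_of_dvd (hq ▸ dvd_mul_right _ _)

variable {r}

theorem eq_replicate_of_sum_pow_eq (h1 : 1 < r) {i : ℕ} {t : Multiset ℕ}
    (ht : ∀ m ∈ t, Even m ∨ m < 2 * i)
    (hsum : (t.map (r ^ ·)).sum = (r.den : ℚ≥0) ^ 2 * r ^ (2 * i + 2))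
    (hcard : card t ≤ r.den ^ 2) :
    t = replicate (r.den ^ 2) (2 * i + 2) := by
  have hr0 : 0 < r := zero_lt_one.trans h1
  have ht0 : t ≠ 0 := by
    rintro rfl
    exact (mul_pos (pow_pos (Nat.cast_pos.mpr r.den_pos) 2) (pow_pos hr0 _)).ne' hsum.symm
  obtain ⟨M, hMt, hMmax⟩ := exists_max_image id ht0
  have hKM : 2 * i + 2 ≤ M := by
    have h : (r.den : ℚ≥0) ^ 2 * r ^ (2 * i + 2) ≤ (r.den : ℚ≥0) ^ 2 * r ^ M :=
      calc (r.den : ℚ≥0) ^ 2 * r ^ (2 * i + 2) = (t.map (r ^ ·)).sum := hsum.symm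
        _ ≤ card t • r ^ M := by
          simpa using sum_le_card_nsmul (t.map (r ^ ·)) (r ^ M) (by
            simpa using fun m hm => pow_le_pow_right₀ h1.le (hMmax m hm))
        _ ≤ (r.den : ℚ≥0) ^ 2 * r ^ M := by
          rw [nsmul_eq_mul]
          gcongr
          exact_mod_cast hcard
    exact (pow_le_pow_iff_right₀ h1).mp (le_of_mul_le_mul_left h (by positivity))
  have hgap : ∀ m ∈ t, m = M ∨ m + 2 ≤ M := by
    intro m hm
    have hmM : m ≤ M := hMmax m hm
    rcases ht M hMt with ⟨k, hk⟩ | hM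
    · rcases ht m hm with ⟨l, hl⟩ | hm <;> omega
    · omega
  have hdvd := r.den_pow_dvd_count_of_sum_pow_eq hgap hKM hsum
  have hle : r.den ^ 2 ≤ t.count M := Nat.le_of_dvd (count_pos.mpr hMt) hdvd
  have hcard_eq : card t = r.den ^ 2 := le_antisymm hcard (hle.trans (count_le_card M t))
  have htM : t = replicate (r.den ^ 2) M := by
    rw [← hcard_eq, eq_replicate_card]
    exact fun b hb =>
      (count_eq_card.mp (le_antisymm (count_le_card M t) (hcard.trans hle)) b hb).symm
  have hM : M = 2 * i + 2 := by
    rw [htM, map_replicate, sum_replicate, nsmul_eq_mul, Nat.cast_pow] at hsum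
    exact pow_right_injective₀ hr0 h1.ne' (mul_left_cancel₀ (by positivity) hsum)
  rw [htM, hM]

lemma exists_exponents_lt_of_mem_closure (h1 : 1 < r) {S : Set ℚ≥0}
    (hS : S ⊆ Set.range (r ^ ·)) {y : ℚ≥0} (hy : y ∈ AddSubmonoid.closure S) {K : ℕ}
    (hyK : y < r ^ K) : ∃ t : Multiset ℕ, (∀ m ∈ t, m < K) ∧ (t.map (r ^ ·)).sum = y := by
  obtain ⟨l, hlS, rfl⟩ := AddSubmonoid.exists_multiset_of_mem_closure hy
  obtain ⟨t, htK, rfl⟩ := Multiset.exists_map_eq_of_forall_mem_image (f := (r ^ ·))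
    (P := {m | m < K}) fun b hb => by
      obtain ⟨m, rfl⟩ := hS (hlS b hb)
      exact ⟨m, (pow_lt_pow_iff_right₀ h1).mp
        ((single_le_sum (fun _ _ => _root_.zero_le) _ hb).trans_lt hyK), rfl⟩
  exact ⟨t, htK, rfl⟩

lemma pow_mem_PMatoms_closure (h1 : 1 < r) (hd : r.den ≠ 1) {S : Set ℚ≥0}
    (hS : S ⊆ Set.range (r ^ ·)) {K : ℕ} (hK : r ^ K ∈ S) :
    r ^ K ∈ PMatoms (AddSubmonoid.closure S) := by
  refine ⟨AddSubmonoid.subset_closure hK, (pow_pos (zero_lt_one.trans h1) K).ne', ?_⟩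
  intro y hy z hz hy0 hz0 hyz
  obtain ⟨ty, hty, rfl⟩ := exists_exponents_lt_of_mem_closure h1 hS hy
    (hyz ▸ lt_add_of_pos_right _ (pos_iff_ne_zero.mpr hz0))
  obtain ⟨tz, htz, rfl⟩ := exists_exponents_lt_of_mem_closure h1 hS hz
    (hyz ▸ lt_add_of_pos_left _ (pos_iff_ne_zero.mpr hy0))
  refine r.sum_pow_ne_pow_of_lt hd (t := ty + tz) (fun m hm => ?_)
    (by rw [map_add, sum_add, hyz])
  rcases mem_add.mp hm with hm | hm
  exacts [hty m hm, htz m hm]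

end NNRat

theorem stmt17_general (r : ℚ≥0) (h1 : 1 < r) (hn : ∀ n : ℕ, r ≠ (n : ℚ≥0))
    (i : ℕ)
    (Mi : AddSubmonoid ℚ≥0)
    (hMi : Mi = AddSubmonoid.closure
      ({q : ℚ≥0 | ∃ k : ℕ, q = r ^ (2 * k)} ∪
       {q : ℚ≥0 | ∃ j : ℕ, 1 ≤ j ∧ j ≤ i ∧ q = r ^ (2 * j - 1)}))
    (x : ℚ≥0) (hx : x = (r.num : ℚ≥0) ^ 2 * r ^ (2 * i)) :
    Multiset.replicate (r.den ^ 2) (r ^ (2 * i + 2)) ∈ PMfactorizations Mi x ∧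
    ∀ s ∈ PMfactorizations Mi x,
      s.card ≤ (Multiset.replicate (r.den ^ 2) (r ^ (2 * i + 2))).card →
        s = Multiset.replicate (r.den ^ 2) (r ^ (2 * i + 2)) := by
  set G := {q : ℚ≥0 | ∃ k : ℕ, q = r ^ (2 * k)} ∪
    {q : ℚ≥0 | ∃ j : ℕ, 1 ≤ j ∧ j ≤ i ∧ q = r ^ (2 * j - 1)}
  subst hMi hx
  have hd : r.den ≠ 1 := fun h => hn r.num (by rw [← r.den_mul_eq_num, h, Nat.cast_one, one_mul])
  have hx : (r.num : ℚ≥0) ^ 2 * r ^ (2 * i) = (r.den : ℚ≥0) ^ 2 * r ^ (2 * i + 2) := by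
    rw [← r.den_mul_eq_num]
    ring
  have hG : G ⊆ (r ^ ·) '' {m | Even m ∨ m < 2 * i} := by
    rintro _ (⟨k, rfl⟩ | ⟨j, hj1, hji, rfl⟩)
    exacts [⟨2 * k, Or.inl (even_two_mul k), rfl⟩, ⟨2 * j - 1, Or.inr (by omega), rfl⟩]
  have hatom : r ^ (2 * i + 2) ∈ PMatoms (AddSubmonoid.closure G) :=
    NNRat.pow_mem_PMatoms_closure h1 hd (hG.trans (Set.image_subset_range _ _))
      (Or.inl ⟨i + 1, by ring⟩)
  refine ⟨⟨fun a ha => eq_of_mem_replicate ha ▸ hatom, by simp [hx]⟩, ?_⟩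
  rintro s ⟨hs, hsum⟩ hcard
  obtain ⟨t, ht, rfl⟩ := Multiset.exists_map_eq_of_forall_mem_image
    fun a ha => hG (PMatoms_closure_subset G (hs a ha))
  rw [NNRat.eq_replicate_of_sum_pow_eq h1 ht (hsum.trans hx) (by simpa using hcard),
    map_replicate]

theorem stmt17 (r : ℚ≥0) (h1 : 1 < r) (hn : ∀ n : ℕ, r ≠ (n : ℚ≥0))
    (i : ℕ) (hi : 1 ≤ i)
    (Mi : AddSubmonoid ℚ≥0)
    (hMi : Mi = AddSubmonoid.closure
      ({q : ℚ≥0 | ∃ k : ℕ, q = r ^ (2 * k)} ∪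
       {q : ℚ≥0 | ∃ j : ℕ, 1 ≤ j ∧ j ≤ i ∧ q = r ^ (2 * j - 1)}))
    (x : ℚ≥0) (hx : x = (r.num : ℚ≥0) ^ 2 * r ^ (2 * i)) :
    Multiset.replicate (r.den ^ 2) (r ^ (2 * i + 2)) ∈ PMfactorizations Mi x ∧
    ∀ s ∈ PMfactorizations Mi x,
      s.card ≤ (Multiset.replicate (r.den ^ 2) (r ^ (2 * i + 2))).card →
        s = Multiset.replicate (r.den ^ 2) (r ^ (2 * i + 2)) :=
  stmt17_general r h1 hn i Mi hMi x hx
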